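/- Let V be a finite-dimensional real vector space and ω̂ a scalar (real-valued) polylagrangian (k+1)-form on V of rank N with N > k > 1 and polylagrangian subspace L, with ω̂ nondegenerate. Then any two-dimensional isotropic subspace of V intersects L nontrivially; consequently for any isotropic subspace L̃ of V, dim L̃ − dim(L̃ ∩ L) ≤ 1. -/

import Mathlib

/-!
Suppose `u, w` in an isotropic subspace were linearly independent modulo `L`. Since `k < N`,
their classes extend to `k` vectors `x` independent in `V ⧸ L`, and the determinant of the
coordinates along these classes is a `k`-form `α` with `α x = 1` that vanishes as soon as one
argument lies in `L`. Polylagrangianity writes `α = i_v ω` for some `v`, so `ω (v, x) = 1`; but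
`x` contains `u` and `w`, so `ω (v, x) = ± ω (u, w, …) = 0` by isotropy. Hence an isotropic
subspace has image of dimension at most one in `V ⧸ L`.
-/

open Module

/-- `L` is a polylagrangian subspace for the scalar `(k+1)`-form `ω`. -/
def IsPolyLag {V : Type*} [AddCommGroup V] [Module ℝ V]
    {k : ℕ} (ω : V [⋀^Fin (k+1)]→ₗ[ℝ] ℝ) (L : Submodule ℝ V) : Prop :=
  ∀ α : V [⋀^Fin k]→ₗ[ℝ] ℝ,
    (∃ v ∈ L, ∀ x : Fin k → V, ω (Fin.cons v x) = α x)
      ↔ ∀ (x : Fin k → V) (i : Fin k), x i ∈ L → α x = 0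

theorem Submodule.finrank_map_mkQ_add_finrank_inf {K V : Type*} [DivisionRing K]
    [AddCommGroup V] [Module K V] [FiniteDimensional K V] (W L : Submodule K V) :
    finrank K (W.map L.mkQ) + finrank K ↥(W ⊓ L) = finrank K W := by
  have := LinearMap.finrank_range_add_finrank_ker (L.mkQ.domRestrict W)
  rwa [LinearMap.range_domRestrict, LinearMap.ker_domRestrict, Submodule.ker_mkQ,
    ← Submodule.finrank_map_subtype_eq, Submodule.map_comap_subtype] at this

theorem exists_linearIndependent_comp_extension {K M N : Type*} [DivisionRing K]
    [AddCommGroup M] [Module K M] [AddCommGroup N] [Module K N]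
    {f : M →ₗ[K] N} (hf : Function.Surjective f) {m : ℕ} {s : Fin m → M}
    (hs : LinearIndependent K (f ∘ s)) :
    ∀ d, m + d ≤ finrank K N →
      ∃ x : Fin (m + d) → M, LinearIndependent K (f ∘ x) ∧ ∀ i, x (Fin.castAdd d i) = s i
  | 0, _ => ⟨s, hs, fun _ => rfl⟩
  | d + 1, hd => by
    obtain ⟨x, hx, hxs⟩ := exists_linearIndependent_comp_extension hf hs d (by omega)
    obtain ⟨a, ha⟩ := exists_linearIndependent_snoc_of_lt_finrank hx (by omega)
    obtain ⟨a, rfl⟩ := hf a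
    refine ⟨Fin.snoc x a, by rwa [Fin.comp_snoc], fun i => ?_⟩
    rw [← hxs i, ← Fin.snoc_castSucc (α := fun _ => M) a x]
    rfl

theorem exists_alternatingMap_eq_one_of_linearIndependent_comp {K M N : Type*} [Field K]
    [AddCommGroup M] [Module K M] [AddCommGroup N] [Module K N] {n : ℕ}
    (f : M →ₗ[K] N) {x : Fin n → M} (hx : LinearIndependent K (f ∘ x)) :
    ∃ θ : M [⋀^Fin n]→ₗ[K] K, (∀ y i, f (y i) = 0 → θ y = 0) ∧ θ x = 1 := by
  let S := Submodule.span K (Set.range (f ∘ x))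
  obtain ⟨p, hp⟩ := S.subtype.exists_leftInverse_of_injective S.ker_subtype
  let b := Basis.span hx
  have hpb : ∀ i, p (f (x i)) = b i := fun i => by
    rw [Basis.span_apply hx i]
    exact LinearMap.congr_fun hp ⟨f (x i), Submodule.subset_span ⟨i, rfl⟩⟩
  refine ⟨b.det.compLinearMap (p ∘ₗ f), fun y i hy => ?_, ?_⟩
  · rw [AlternatingMap.compLinearMap_apply]
    exact b.det.map_coord_zero i (by rw [LinearMap.comp_apply, hy, map_zero])
  · simp only [AlternatingMap.compLinearMap_apply, LinearMap.comp_apply, hpb]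
    exact b.det_self

def IsIsotropic {R M N : Type*} [CommRing R] [AddCommGroup M] [Module R M] [AddCommGroup N]
    [Module R N] {k : ℕ} (ω : M [⋀^Fin (k+1)]→ₗ[R] N) (W : Submodule R M) : Prop :=
  ∀ x : Fin (k+1) → M, x 0 ∈ W → x 1 ∈ W → ω x = 0

theorem IsIsotropic.apply_eq_zero {R M N : Type*} [CommRing R] [AddCommGroup M] [Module R M]
    [AddCommGroup N] [Module R N] {k : ℕ} {ω : M [⋀^Fin (k+1)]→ₗ[R] N} {W : Submodule R M}
    (hW : IsIsotropic ω W) {x : Fin (k+1) → M} {i j : Fin (k+1)} (hij : i ≠ j)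
    (hi : x i ∈ W) (hj : x j ∈ W) : ω x = 0 := by
  have h01 : (0 : Fin (k+1)) ≠ 1 := by
    rcases k with _ | k
    · exact absurd (Subsingleton.elim (α := Fin 1) i j) hij
    · exact zero_ne_one
  let τ := Equiv.swap 0 i
  let σ := τ * Equiv.swap 1 (τ j)
  have hτj : τ j ≠ 0 := by
    rw [Ne, Equiv.swap_apply_eq_iff, Equiv.swap_apply_left]; exact hij.symm
  have hσ0 : σ 0 = i := by
    simp [σ, τ, Equiv.swap_apply_of_ne_of_ne h01 hτj.symm]
  have hσ1 : σ 1 = j := by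
    simp [σ, τ]
  have hperm := ω.map_perm x σ
  rwa [hW (x ∘ σ) (by simpa [hσ0]) (by simpa [hσ1]), eq_comm, smul_eq_zero_iff_eq] at hperm

section Polylagrangian

variable {V : Type*} [AddCommGroup V] [Module ℝ V] {k : ℕ} {ω : V [⋀^Fin (k+1)]→ₗ[ℝ] ℝ}
  {L W : Submodule ℝ V}

theorem IsPolyLag.not_linearIndependent_mkQ_pair (hL : IsPolyLag ω L)
    (hW : IsIsotropic ω W) (hk : 2 ≤ k) (hkL : k ≤ finrank ℝ (V ⧸ L)) {u w : V}
    (hu : u ∈ W) (hw : w ∈ W) : ¬ LinearIndependent ℝ (L.mkQ ∘ ![u, w]) := by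
  intro huw
  obtain ⟨d, rfl⟩ : ∃ d, k = 2 + d := ⟨k - 2, by omega⟩
  obtain ⟨x, hx, hxuw⟩ := exists_linearIndependent_comp_extension L.mkQ_surjective huw d hkL
  obtain ⟨θ, hθL, hθx⟩ := exists_alternatingMap_eq_one_of_linearIndependent_comp L.mkQ hx
  obtain ⟨v, -, hv⟩ := (hL θ).mpr fun y i hy =>
    hθL y i ((Submodule.Quotient.mk_eq_zero L).mpr hy)
  have hvx : ω (Fin.cons v x) = 0 :=
    hW.apply_eq_zero (i := (Fin.castAdd d 0).succ) (j := (Fin.castAdd d 1).succ) (by simp)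
      (by simpa [hxuw] using hu) (by simpa [hxuw] using hw)
  rw [hv, hθx] at hvx
  exact one_ne_zero hvx

theorem IsPolyLag.finrank_map_mkQ_le_one (hL : IsPolyLag ω L)
    (hW : IsIsotropic ω W) (hk : 2 ≤ k) (hkL : k ≤ finrank ℝ (V ⧸ L)) :
    finrank ℝ (W.map L.mkQ) ≤ 1 := by
  by_contra! h
  have := Module.nontrivial_of_finrank_pos (zero_lt_one.trans h)
  obtain ⟨⟨_, u, hu, rfl⟩, hu0⟩ := exists_ne (0 : W.map L.mkQ)
  obtain ⟨⟨_, w, hw, rfl⟩, huw⟩ := exists_linearIndependent_pair_of_one_lt_finrank h hu0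
  refine hL.not_linearIndependent_mkQ_pair hW hk hkL hu hw ?_
  have hcomp :
      L.mkQ ∘ ![u, w] = (W.map L.mkQ).subtype ∘ ![⟨_, u, hu, rfl⟩, ⟨_, w, hw, rfl⟩] := by
    ext i
    fin_cases i <;> rfl
  rw [hcomp]
  exact huw.map' _ (W.map L.mkQ).ker_subtype

end Polylagrangian

theorem stmt5_general {V : Type*} [AddCommGroup V] [Module ℝ V] [FiniteDimensional ℝ V]
    {k N : ℕ} (hk : 1 < k) (hkN : k < N)
    (ω : V [⋀^Fin (k+1)]→ₗ[ℝ] ℝ)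
    (L : Submodule ℝ V) (hL : IsPolyLag ω L) (hN : Module.finrank ℝ (V ⧸ L) = N) :
    (∀ L' : Submodule ℝ V,
        (∀ x : Fin (k+1) → V, x 0 ∈ L' → x 1 ∈ L' → ω x = 0) →
        Module.finrank ℝ ↥L' = 2 → L' ⊓ L ≠ ⊥)
      ∧ ∀ L' : Submodule ℝ V,
          (∀ x : Fin (k+1) → V, x 0 ∈ L' → x 1 ∈ L' → ω x = 0) →
          Module.finrank ℝ ↥L' - Module.finrank ℝ ↥(L' ⊓ L) ≤ 1 := by
  have hcodim : ∀ L' : Submodule ℝ V, IsIsotropic ω L' →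
      finrank ℝ L' - finrank ℝ ↥(L' ⊓ L) ≤ 1 := fun L' hL' => by
    have := hL.finrank_map_mkQ_le_one hL' hk (by omega)
    have := L'.finrank_map_mkQ_add_finrank_inf L
    omega
  refine ⟨fun L' hL' h2 hbot => ?_, hcodim⟩
  have := hcodim L' hL'
  rw [h2, hbot, finrank_bot] at this
  omega

/-- For a nondegenerate scalar polylagrangian `(k+1)`-form of rank `N` with `N > k > 1`:
every two-dimensional isotropic subspace intersects the polylagrangian subspace `L`
nontrivially, and consequently any isotropic subspace `L'` satisfies
`dim L' − dim (L' ∩ L) ≤ 1`. -/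
theorem stmt5 {V : Type*} [AddCommGroup V] [Module ℝ V] [FiniteDimensional ℝ V]
    {k N : ℕ} (hk : 1 < k) (hkN : k < N)
    (ω : V [⋀^Fin (k+1)]→ₗ[ℝ] ℝ) (hnd : LinearMap.ker ω.curryLeft = ⊥)
    (L : Submodule ℝ V) (hL : IsPolyLag ω L) (hN : Module.finrank ℝ (V ⧸ L) = N) :
    (∀ L' : Submodule ℝ V,
        (∀ x : Fin (k+1) → V, x 0 ∈ L' → x 1 ∈ L' → ω x = 0) →
        Module.finrank ℝ ↥L' = 2 → L' ⊓ L ≠ ⊥)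
      ∧ ∀ L' : Submodule ℝ V,
          (∀ x : Fin (k+1) → V, x 0 ∈ L' → x 1 ∈ L' → ω x = 0) →
          Module.finrank ℝ ↥L' - Module.finrank ℝ ↥(L' ⊓ L) ≤ 1 :=
  stmt5_general hk hkN ω L hL hN
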